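/- Let M be a finitely generated C-module (C infinite cyclic, generated by t) such that M ⊗ ℚ is finite-dimensional, and set V = M ⊗ ℚ. Then the natural map of exterior powers Λ^n(V) → Λ^n(V̂_I) induced by the I-adic completion map V → V̂_I is a split surjection of C-modules for every n, where I is the augmentation ideal of ℚ[C]. -/

import Mathlib

open CategoryTheory

/-- The infinite cyclic group `C`. -/
abbrev CInf : Type := Multiplicative ℤ

/-- The rational group ring `ℚ[C]`. -/
abbrev QC : Type := MonoidAlgebra ℚ CInf

/-- The augmentation ideal `I = Ker(ℚ[C] → ℚ)`. -/
noncomputable def augIdeal : Ideal QC :=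
  RingHom.ker ((MonoidAlgebra.lift ℚ ℚ CInf) 1).toRingHom

/-- The generator `t` of `C` inside `ℚ[C]`. -/
noncomputable def tQC : QC := MonoidAlgebra.of ℚ CInf (Multiplicative.ofAdd (1 : ℤ))

/-- Any `ℚ[C]`-module is a `ℚ`-vector space by restriction of scalars. -/
noncomputable def modQ (W : Type) [AddCommGroup W] [Module QC W] : Module ℚ W :=
  Module.compHom W (algebraMap ℚ QC)

attribute [local instance] modQ

section
variable (W : Type) [AddCommGroup W] [Module QC W]

/-- The action of the generator `t` of `C` as a `ℚ`-linear endomorphism. -/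
noncomputable def tAct : W →ₗ[ℚ] W where
  toFun w := tQC • w
  map_add' a b := smul_add tQC a b
  map_smul' q w := by
    show tQC • ((algebraMap ℚ QC q) • w) = (algebraMap ℚ QC q) • (tQC • w)
    rw [← mul_smul, mul_comm, mul_smul]

end

/-- The `ℚ`-linear map on `n`-th exterior powers induced by a linear map. -/
noncomputable def extPowerMap {W W' : Type} [AddCommGroup W] [Module ℚ W] [AddCommGroup W']
    [Module ℚ W'] (n : ℕ) (f : W →ₗ[ℚ] W') : ⋀[ℚ]^n W →ₗ[ℚ] ⋀[ℚ]^n W' :=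
  (ExteriorAlgebra.map f).toLinearMap.restrict (p := ⋀[ℚ]^n W) (q := ⋀[ℚ]^n W')
    (by
      intro x hx
      have hle : Submodule.map (ExteriorAlgebra.map f).toLinearMap
          (LinearMap.range (ExteriorAlgebra.ι ℚ (M := W))) ≤
          LinearMap.range (ExteriorAlgebra.ι ℚ (M := W')) := by
        rintro _ ⟨_, ⟨m, rfl⟩, rfl⟩
        exact ⟨f m, (LinearMap.congr_fun (ExteriorAlgebra.map_comp_ι f) m).symm⟩
      have := Submodule.map_pow (M := LinearMap.range (ExteriorAlgebra.ι ℚ (M := W)))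
        (ExteriorAlgebra.map f) n
      have hx' : (ExteriorAlgebra.map f).toLinearMap x ∈
          Submodule.map (ExteriorAlgebra.map f).toLinearMap
            (LinearMap.range (ExteriorAlgebra.ι ℚ (M := W)) ^ n) :=
        Submodule.mem_map_of_mem hx
      rw [this] at hx'
      exact pow_le_pow_left' hle n hx')

section
variable (V : Type) [AddCommGroup V] [Module QC V]

/-- The natural map `V → V̂_I` to the `I`-adic completion, as a `ℚ`-linear map. -/
noncomputable def ofQ : V →ₗ[ℚ] AdicCompletion augIdeal V where
  toFun := AdicCompletion.of augIdeal V
  map_add' a b := map_add _ a b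
  map_smul' q v := map_smul (AdicCompletion.of augIdeal V) (algebraMap ℚ QC q) v

end

/-!
The augmentation ideal is generated by `t - 1`, so `I ^ i • V` is the range of `(t - 1) ^ i`. By
Fitting's lemma these ranges stabilise at some `N` with `V = ker (t - 1) ^ N ⊕ I ^ N • V`. Hence
`V̂_I = V ⧸ I ^ N • V`, onto which the complement `ker (t - 1) ^ N` maps isomorphically; the inverse
is a `ℚ[C]`-linear section of `V → V̂_I`, and `Λ^n` carries it to an equivariant section.
-/

namespace AdicCompletion

variable {R M : Type*} [CommRing R] [AddCommGroup M] [Module R M] {I : Ideal R}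

theorem eval_injective_of_pow_smul_top_eq {N : ℕ}
    (h : ∀ i, N ≤ i → I ^ i • (⊤ : Submodule R M) = I ^ N • ⊤) :
    Function.Injective (eval I M N) := by
  refine (injective_iff_map_eq_zero _).mpr fun x hx ↦ ext fun i ↦ ?_
  rw [eval_apply] at hx
  rcases le_total i N with hiN | hNi
  · rw [← transitionMap_comp_eval_apply I M hiN, hx, _root_.map_zero, val_zero_apply]
  · obtain ⟨w, hw⟩ := Submodule.mkQ_surjective _ (x.val i)
    have hwN : w ∈ I ^ N • (⊤ : Submodule R M) := by
      rw [← Submodule.Quotient.mk_eq_zero, ← hx, ← transitionMap_comp_eval_apply I M hNi, ← hw]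
      rfl
    rw [val_zero_apply, ← hw, Submodule.mkQ_apply, Submodule.Quotient.mk_eq_zero, h i hNi]
    exact hwN

theorem exists_of_comp_eq_id_of_isCompl {N : ℕ}
    (h : ∀ i, N ≤ i → I ^ i • (⊤ : Submodule R M) = I ^ N • ⊤) {K : Submodule R M}
    (hK : IsCompl (I ^ N • ⊤) K) :
    ∃ p : AdicCompletion I M →ₗ[R] M, of I M ∘ₗ p = LinearMap.id := by
  refine ⟨K.subtype ∘ₗ (Submodule.quotientEquivOfIsCompl _ K hK).toLinearMap ∘ₗ eval I M N, ?_⟩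
  refine LinearMap.ext fun x ↦ eval_injective_of_pow_smul_top_eq h ?_
  exact Submodule.mk_quotientEquivOfIsCompl_apply hK (eval I M N x)

open Pointwise in
theorem range_toModuleEnd_pow (a : R) (i : ℕ) :
    LinearMap.range (DistribMulAction.toModuleEnd R M a ^ i) = Ideal.span {a} ^ i • ⊤ := by
  rw [Ideal.span_singleton_pow, Submodule.ideal_span_singleton_smul, ← map_pow,
    LinearMap.range_eq_map]
  rfl

theorem exists_of_comp_eq_id_of_span_singleton [IsNoetherian R M] [IsArtinian R M] (a : R) :
    ∃ p : AdicCompletion (Ideal.span {a}) M →ₗ[R] M, of _ M ∘ₗ p = LinearMap.id := by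
  set f := DistribMulAction.toModuleEnd R M a
  obtain ⟨N, hN⟩ := Filter.eventually_atTop.mp
    (f.eventually_isCompl_ker_pow_range_pow.and f.eventually_iInf_range_pow_eq)
  have hstable (i : ℕ) (hi : N ≤ i) :
      Ideal.span {a} ^ i • (⊤ : Submodule R M) = Ideal.span {a} ^ N • ⊤ := by
    rw [← range_toModuleEnd_pow, ← range_toModuleEnd_pow]
    exact (hN i hi).2.symm.trans (hN N le_rfl).2
  refine exists_of_comp_eq_id_of_isCompl hstable (K := LinearMap.ker (f ^ N)) ?_
  rw [← range_toModuleEnd_pow]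
  exact (hN N le_rfl).1.symm

end AdicCompletion

theorem augIdeal_eq_span_tQC_sub_one : augIdeal = Ideal.span {tQC - 1} := by
  set J := Ideal.span {tQC - 1}
  have hπ : Ideal.Quotient.mkₐ ℚ J =
      (Algebra.ofId ℚ (QC ⧸ J)).comp (MonoidAlgebra.lift ℚ ℚ CInf 1) := by
    apply (MonoidAlgebra.lift ℚ (QC ⧸ J) CInf).symm.injective
    ext
    have ht : Ideal.Quotient.mk J (tQC - 1) = 0 :=
      Ideal.Quotient.eq_zero_iff_mem.mpr (Ideal.mem_span_singleton_self _)
    rw [map_sub, map_one, sub_eq_zero] at ht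
    simpa [tQC] using ht
  apply le_antisymm
  · intro x hx
    have hx' : MonoidAlgebra.lift ℚ ℚ CInf 1 x = 0 := hx
    rw [← Ideal.Quotient.eq_zero_iff_mem, ← Ideal.Quotient.mkₐ_eq_mk ℚ, hπ]
    simp [hx']
  · rw [Ideal.span_le, Set.singleton_subset_iff]
    simp [augIdeal, tQC]

instance (W : Type) [AddCommGroup W] [Module QC W] : IsScalarTower ℚ QC W where
  smul_assoc q a w := by rw [Algebra.smul_def, mul_smul]; rfl

theorem LinearMap.restrictScalars_comp_tAct {W W' : Type} [AddCommGroup W] [Module QC W]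
    [AddCommGroup W'] [Module QC W'] (f : W →ₗ[QC] W') :
    f.restrictScalars ℚ ∘ₗ tAct W = tAct W' ∘ₗ f.restrictScalars ℚ :=
  LinearMap.ext fun w ↦ f.map_smul tQC w

theorem extPowerMap_comp {W W' W'' : Type} [AddCommGroup W] [Module ℚ W] [AddCommGroup W']
    [Module ℚ W'] [AddCommGroup W''] [Module ℚ W''] (n : ℕ) (f : W' →ₗ[ℚ] W'')
    (g : W →ₗ[ℚ] W') :
    extPowerMap n (f ∘ₗ g) = extPowerMap n f ∘ₗ extPowerMap n g :=
  LinearMap.ext fun x ↦ Subtype.ext <| by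
    simp [extPowerMap, ← ExteriorAlgebra.map_comp_map]

theorem extPowerMap_id {W : Type} [AddCommGroup W] [Module ℚ W] (n : ℕ) :
    extPowerMap n (LinearMap.id : W →ₗ[ℚ] W) = LinearMap.id :=
  LinearMap.ext fun x ↦ Subtype.ext <| by simp [extPowerMap]

/-- let `V` be a `ℚ[C]`-module which is finite dimensional over `ℚ`
(equivalently, `V = M ⊗ ℚ` for a finitely generated `C`-module `M` with `M ⊗ ℚ` finite
dimensional).  Then for every `n` the natural map `Λ^n V → Λ^n (V̂_I)` induced by the
`I`-adic completion `V → V̂_I` is a split surjection of `C`-modules: it admits a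
`C`-equivariant `ℚ`-linear section. -/
theorem bousfield_stmt19 (V : Type) [AddCommGroup V] [Module QC V]
    [FiniteDimensional ℚ V] (n : ℕ) :
    ∃ s : (⋀[ℚ]^n (AdicCompletion augIdeal V)) →ₗ[ℚ] (⋀[ℚ]^n V),
      (extPowerMap n (ofQ V)) ∘ₗ s = LinearMap.id ∧
      s ∘ₗ (extPowerMap n (tAct (AdicCompletion augIdeal V))) =
        (extPowerMap n (tAct V)) ∘ₗ s := by
  have : IsNoetherian QC V := isNoetherian_of_tower ℚ inferInstance
  have : IsArtinian QC V := isArtinian_of_tower ℚ inferInstance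
  obtain ⟨p, hp⟩ : ∃ p : AdicCompletion augIdeal V →ₗ[QC] V,
      AdicCompletion.of _ V ∘ₗ p = LinearMap.id := by
    rw [augIdeal_eq_span_tQC_sub_one]
    exact AdicCompletion.exists_of_comp_eq_id_of_span_singleton _
  have hpℚ : ofQ V ∘ₗ p.restrictScalars ℚ = LinearMap.id :=
    LinearMap.ext fun x ↦ LinearMap.congr_fun hp x
  refine ⟨extPowerMap n (p.restrictScalars ℚ), ?_, ?_⟩
  · rw [← extPowerMap_comp, hpℚ, extPowerMap_id]
  · rw [← extPowerMap_comp, p.restrictScalars_comp_tAct, extPowerMap_comp]
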